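/- arXiv:2006.14963 — 3 statements merged into one kernel-verified Lean document; each statement's English description precedes it below -/
import Mathlib

section
/- Let p ≥ 2 be a natural number and let Φ: ℝⁿ → ℝⁿ be p-times continuously differentiable on a neighborhood of a point ξ with Φ(ξ) = ξ, and assume that all derivatives of Φ of orders 1 through p − 1 vanish at ξ (i.e., the iterated Fréchet derivatives D^j Φ(ξ) = 0 for 1 ≤ j ≤ p − 1). If a sequence defined by x_{i+1} = Φ(x_i) converges to ξ, then there exist a constant C ≥ 0 and an index N such that ‖x_{i+1} − ξ‖ ≤ C ‖x_i − ξ‖^p for all i ≥ N; that is, the iteration has order of convergence at least p. -/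
/-!
Descending induction on the order of the derivative: if `‖D^(k+1) f z‖ ≤ M ‖z - ξ‖ ^ (p - k - 1)`
near `ξ` and `D^k f ξ = 0`, the mean value inequality on the ball of radius `‖z - ξ‖` gives
`‖D^k f z‖ ≤ M ‖z - ξ‖ ^ (p - k)`. Starting from a bound `M` on `D^p Φ` near `ξ` (continuity of
the `p`-th derivative) and applying this to `f = Φ - ξ`, whose derivatives of orders `0, …, p - 1`
all vanish at `ξ`, gives `‖Φ y - ξ‖ ≤ M ‖y - ξ‖ ^ p` near `ξ`; a convergent orbit eventually
stays in that neighbourhood.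
-/

open Filter Metric Topology

variable {𝕜 E F : Type*} [NontriviallyNormedField 𝕜] [IsRCLikeNormedField 𝕜]
  [NormedAddCommGroup E] [NormedSpace ℝ E] [NormedSpace 𝕜 E]
  [NormedAddCommGroup F] [NormedSpace 𝕜 F]

theorem norm_sub_le_mul_norm_sub_pow_succ_of_norm_fderiv_le {f : E → F} {x₀ y : E} {r M : ℝ}
    {k : ℕ} (hM : 0 ≤ M) (hf : ∀ z ∈ closedBall x₀ r, DifferentiableAt 𝕜 f z)
    (hbound : ∀ z ∈ closedBall x₀ r, ‖fderiv 𝕜 f z‖ ≤ M * ‖z - x₀‖ ^ k)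
    (hy : y ∈ closedBall x₀ r) :
    ‖f y - f x₀‖ ≤ M * ‖y - x₀‖ ^ (k + 1) := by
  have hsub : closedBall x₀ ‖y - x₀‖ ⊆ closedBall x₀ r :=
    closedBall_subset_closedBall (mem_closedBall_iff_norm.1 hy)
  have hbound' : ∀ z ∈ closedBall x₀ ‖y - x₀‖, ‖fderiv 𝕜 f z‖ ≤ M * ‖y - x₀‖ ^ k := fun z hz =>
    (hbound z (hsub hz)).trans (by gcongr; exact mem_closedBall_iff_norm.1 hz)
  calc ‖f y - f x₀‖ ≤ M * ‖y - x₀‖ ^ k * ‖y - x₀‖ :=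
        (convex_closedBall x₀ _).norm_image_sub_le_of_norm_fderiv_le
          (fun z hz => hf z (hsub hz)) hbound' (mem_closedBall_self (norm_nonneg _))
          (mem_closedBall_iff_norm.2 le_rfl)
    _ = M * ‖y - x₀‖ ^ (k + 1) := by ring

theorem norm_le_mul_norm_sub_pow_of_iteratedFDeriv_eq_zero {f : E → F} {ξ : E} {r M : ℝ}
    {p : ℕ} (hM : 0 ≤ M) (hf : ∀ z ∈ closedBall ξ r, ContDiffAt 𝕜 p f z)
    (hbound : ∀ z ∈ closedBall ξ r, ‖iteratedFDeriv 𝕜 p f z‖ ≤ M)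
    (hvanish : ∀ j < p, iteratedFDeriv 𝕜 j f ξ = 0) :
    ∀ y ∈ closedBall ξ r, ‖f y‖ ≤ M * ‖y - ξ‖ ^ p := by
  suffices h : ∀ k ≤ p, ∀ y ∈ closedBall ξ r, ‖iteratedFDeriv 𝕜 (p - k) f y‖ ≤ M * ‖y - ξ‖ ^ k by
    intro y hy
    have h0 := h p le_rfl y hy
    rwa [Nat.sub_self, norm_iteratedFDeriv_zero] at h0
  intro k
  induction k with
  | zero => simpa using hbound
  | succ k ih =>
    intro hk y hy
    have hdiff : ∀ z ∈ closedBall ξ r, DifferentiableAt 𝕜 (iteratedFDeriv 𝕜 (p - (k + 1)) f) z :=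
      fun z hz => ((hf z hz).iteratedFDeriv_right (m := 1) (by norm_cast; omega)).differentiableAt
        one_ne_zero
    have hderiv : ∀ z ∈ closedBall ξ r,
        ‖fderiv 𝕜 (iteratedFDeriv 𝕜 (p - (k + 1)) f) z‖ ≤ M * ‖z - ξ‖ ^ k := fun z hz => by
      rw [norm_fderiv_iteratedFDeriv, show p - (k + 1) + 1 = p - k by omega]
      exact ih (by omega) z hz
    simpa [hvanish (p - (k + 1)) (by omega)] using
      norm_sub_le_mul_norm_sub_pow_succ_of_norm_fderiv_le hM hdiff hderiv hy

theorem exists_eventually_norm_le_mul_norm_sub_pow {f : E → F} {ξ : E} {p : ℕ}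
    (hf : ContDiffAt 𝕜 p f ξ) (hvanish : ∀ j < p, iteratedFDeriv 𝕜 j f ξ = 0) :
    ∃ C, 0 ≤ C ∧ ∀ᶠ y in 𝓝 ξ, ‖f y‖ ≤ C * ‖y - ξ‖ ^ p := by
  set C := ‖iteratedFDeriv 𝕜 p f ξ‖ + 1
  have hnear : ∀ᶠ z in 𝓝 ξ, ContDiffAt 𝕜 p f z ∧ ‖iteratedFDeriv 𝕜 p f z‖ ≤ C :=
    (hf.eventually (by simp)).and <|
      (hf.continuousAt_iteratedFDeriv le_rfl).norm.eventually (eventually_le_nhds (by simp [C]))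
  obtain ⟨r, hr, hball⟩ := nhds_basis_closedBall.mem_iff.1 hnear
  refine ⟨C, by positivity, mem_of_superset (closedBall_mem_nhds ξ hr) ?_⟩
  exact norm_le_mul_norm_sub_pow_of_iteratedFDeriv_eq_zero (by positivity)
    (fun z hz => (hball hz).1) (fun z hz => (hball hz).2) hvanish

theorem exists_eventually_norm_sub_le_mul_norm_sub_pow {f : E → F} {ξ : E} {p : ℕ}
    (hf : ContDiffAt 𝕜 p f ξ) (hvanish : ∀ j, 1 ≤ j → j < p → iteratedFDeriv 𝕜 j f ξ = 0) :
    ∃ C, 0 ≤ C ∧ ∀ᶠ y in 𝓝 ξ, ‖f y - f ξ‖ ≤ C * ‖y - ξ‖ ^ p := by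
  refine exists_eventually_norm_le_mul_norm_sub_pow (hf.sub contDiffAt_const) fun j hj => ?_
  rcases Nat.eq_zero_or_pos j with rfl | hj0
  · ext; simp
  · rw [fun_iteratedFDeriv_sub_apply (hf.of_le (by exact_mod_cast hj.le)) contDiffAt_const,
      iteratedFDeriv_const_of_ne hj0.ne', hvanish j hj0 hj, Pi.zero_apply, sub_zero]

theorem fixed_point_iteration_order_p_convergence_general
    {n : ℕ} (p : ℕ)
    (Φ : EuclideanSpace ℝ (Fin n) → EuclideanSpace ℝ (Fin n))
    (ξ : EuclideanSpace ℝ (Fin n))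
    (hΦ : ∃ s ∈ nhds ξ, ContDiffOn ℝ p Φ s)
    (hfix : Φ ξ = ξ)
    (hvanish : ∀ j : ℕ, 1 ≤ j → j ≤ p - 1 → iteratedFDeriv ℝ j Φ ξ = 0)
    (x : ℕ → EuclideanSpace ℝ (Fin n))
    (hx : ∀ i, x (i + 1) = Φ (x i))
    (hconv : Filter.Tendsto x Filter.atTop (nhds ξ)) :
    ∃ C : ℝ, 0 ≤ C ∧ ∃ N : ℕ, ∀ i ≥ N, ‖x (i + 1) - ξ‖ ≤ C * ‖x i - ξ‖ ^ p := by
  obtain ⟨s, hs, hΦs⟩ := hΦ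
  obtain ⟨C, hC, hnear⟩ := exists_eventually_norm_sub_le_mul_norm_sub_pow (hΦs.contDiffAt hs)
    fun j hj hjp => hvanish j hj (by omega)
  rw [hfix] at hnear
  obtain ⟨N, hN⟩ := (hconv.eventually hnear).exists_forall_of_atTop
  exact ⟨C, hC, N, fun i hi => hx i ▸ hN i hi⟩

/-- Case `p ≥ 2` of the order-of-convergence theorem: if `Φ : ℝⁿ → ℝⁿ` is
`p`-times continuously differentiable on a neighborhood of a fixed point `ξ`
and all its iterated Fréchet derivatives of orders `1, …, p - 1` vanish at
`ξ`, then any orbit of the fixed point iteration converging to `ξ` has order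
of convergence at least `p`. -/
theorem fixed_point_iteration_order_p_convergence
    {n : ℕ} (p : ℕ) (hp : 2 ≤ p)
    (Φ : EuclideanSpace ℝ (Fin n) → EuclideanSpace ℝ (Fin n))
    (ξ : EuclideanSpace ℝ (Fin n))
    (hΦ : ∃ s ∈ nhds ξ, ContDiffOn ℝ p Φ s)
    (hfix : Φ ξ = ξ)
    (hvanish : ∀ j : ℕ, 1 ≤ j → j ≤ p - 1 → iteratedFDeriv ℝ j Φ ξ = 0)
    (x : ℕ → EuclideanSpace ℝ (Fin n))
    (hx : ∀ i, x (i + 1) = Φ (x i))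
    (hconv : Filter.Tendsto x Filter.atTop (nhds ξ)) :
    ∃ C : ℝ, 0 ≤ C ∧ ∃ N : ℕ, ∀ i ≥ N, ‖x (i + 1) - ξ‖ ≤ C * ‖x i - ξ‖ ^ p :=
  fixed_point_iteration_order_p_convergence_general p Φ ξ hΦ hfix hvanish x hx hconv
end

section
/- Let c ≤ a < x be real numbers, let μ > −1 and let α < 0. Then the Riemann–Liouville fractional derivative of order α with base point a of the function t ↦ (t − c)^μ, evaluated at x, satisfies (1/Γ(−α)) ∫_a^x (x − t)^{−α−1} (t − c)^μ dt = (Γ(μ+1)/Γ(μ−α+1)) (x − c)^{μ−α} · G_{−α}((a−c)/(x−c), μ+1), where G_β(r, p) := 1 − B_r(p, β)/B(p, β). -/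
/-- The (complete) Beta function `B(p, q) = ∫_0^1 t^{p-1} (1-t)^{q-1} dt`. -/
noncomputable def betaFun (p q : ℝ) : ℝ :=
  ∫ t in (0:ℝ)..1, t ^ (p - 1) * (1 - t) ^ (q - 1)

/-- The incomplete Beta function `B_r(p, q) = ∫_0^r t^{p-1} (1-t)^{q-1} dt`. -/
noncomputable def incBetaFun (r p q : ℝ) : ℝ :=
  ∫ t in (0:ℝ)..r, t ^ (p - 1) * (1 - t) ^ (q - 1)

/-- `G_β(r, p) := 1 - B_r(p, β) / B(p, β)`. -/
noncomputable def Gfun (β r p : ℝ) : ℝ :=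
  1 - incBetaFun r p β / betaFun p β

/-!
Substituting `t = c + (x - c) s` turns the integral into `(x - c)^{μ-α}` times the tail
`∫_r^1 s^μ (1 - s)^{-α-1} ds = B(μ+1, -α) - B_r(μ+1, -α)` of a Beta integral, with
`r = (a - c)/(x - c)`. Since `B(μ+1, -α) = Γ(μ+1) Γ(-α) / Γ(μ-α+1)`, the factor `Γ(-α)` cancels
and the tail is `B(μ+1, -α) · G_{-α}(r, μ+1)`.
-/

open MeasureTheory intervalIntegral

lemma ofReal_rpow_mul_one_sub_rpow {p q t : ℝ} (h0 : 0 ≤ t) (h1 : t ≤ 1) :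
    ((t ^ (p - 1) * (1 - t) ^ (q - 1) : ℝ) : ℂ)
      = (t : ℂ) ^ ((p : ℂ) - 1) * (1 - (t : ℂ)) ^ ((q : ℂ) - 1) := by
  push_cast
  rw [Complex.ofReal_cpow h0, Complex.ofReal_cpow (sub_nonneg.mpr h1)]
  push_cast
  ring

lemma ofReal_betaFun (p q : ℝ) : (betaFun p q : ℂ) = Complex.betaIntegral p q := by
  rw [betaFun, Complex.betaIntegral, ← integral_ofReal]
  refine integral_congr fun t ht => ?_
  rw [Set.uIcc_of_le zero_le_one] at ht
  exact ofReal_rpow_mul_one_sub_rpow ht.1 ht.2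

lemma betaFun_eq_beta {p q : ℝ} (hp : 0 < p) (hq : 0 < q) :
    betaFun p q = ProbabilityTheory.beta p q := by
  rw [ProbabilityTheory.beta_eq_betaIntegralReal p q hp hq, ← ofReal_betaFun, Complex.ofReal_re]

lemma betaFun_pos {p q : ℝ} (hp : 0 < p) (hq : 0 < q) : 0 < betaFun p q :=
  betaFun_eq_beta hp hq ▸ ProbabilityTheory.beta_pos hp hq

lemma intervalIntegrable_rpow_mul_one_sub_rpow {p q : ℝ} (hp : 0 < p) (hq : 0 < q) :
    IntervalIntegrable (fun t : ℝ => t ^ (p - 1) * (1 - t) ^ (q - 1)) volume 0 1 := by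
  have hC := Complex.betaIntegral_convergent (u := p) (v := q) (by simpa) (by simpa)
  rw [intervalIntegrable_iff] at hC ⊢
  refine hC.re.congr ?_
  filter_upwards [ae_restrict_mem measurableSet_uIoc] with t ht
  rw [Set.uIoc_of_le zero_le_one] at ht
  rw [← ofReal_rpow_mul_one_sub_rpow ht.1.le ht.2]
  exact Complex.ofReal_re _

lemma integral_rpow_mul_one_sub_rpow_eq_betaFun_sub_incBetaFun {p q r : ℝ} (hp : 0 < p)
    (hq : 0 < q) (hr0 : 0 ≤ r) (hr1 : r ≤ 1) :
    ∫ s in r..1, s ^ (p - 1) * (1 - s) ^ (q - 1) = betaFun p q - incBetaFun r p q := by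
  have h01 := intervalIntegrable_rpow_mul_one_sub_rpow hp hq
  have hr : r ∈ Set.uIcc (0:ℝ) 1 := Set.mem_uIcc.mpr (Or.inl ⟨hr0, hr1⟩)
  exact (integral_interval_sub_left h01
    (h01.mono_set (Set.uIcc_subset_uIcc Set.left_mem_uIcc hr))).symm

lemma betaFun_mul_Gfun {p q : ℝ} (r : ℝ) (hB : betaFun p q ≠ 0) :
    betaFun p q * Gfun q r p = betaFun p q - incBetaFun r p q := by
  rw [Gfun]
  field_simp

lemma integral_sub_rpow_mul_rpow_sub {a c x : ℝ} (p q : ℝ) (hca : c ≤ a) (hax : a ≤ x)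
    (hcx : c < x) :
    ∫ t in a..x, (x - t) ^ (q - 1) * (t - c) ^ (p - 1)
      = (x - c) ^ (p + q - 1) *
        ∫ s in (a - c) / (x - c)..1, s ^ (p - 1) * (1 - s) ^ (q - 1) := by
  have hxc : 0 < x - c := sub_pos.mpr hcx
  have hr0 : 0 ≤ (a - c) / (x - c) := div_nonneg (sub_nonneg.mpr hca) hxc.le
  have hsubst := integral_comp_mul_add (a := (a - c) / (x - c)) (b := 1)
    (fun t => (x - t) ^ (q - 1) * (t - c) ^ (p - 1)) hxc.ne' c
  rw [mul_div_cancel₀ _ hxc.ne', sub_add_cancel, mul_one, sub_add_cancel, smul_eq_mul] at hsubst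
  rw [← mul_inv_cancel_left₀ hxc.ne' (∫ t in a..x, _), ← hsubst,
    ← intervalIntegral.integral_const_mul, ← intervalIntegral.integral_const_mul]
  refine integral_congr fun s hs => ?_
  rw [Set.uIcc_of_le ((div_le_one hxc).mpr (by linarith))] at hs
  have hs0 : 0 ≤ s := hr0.trans hs.1
  have hs1 : 0 ≤ 1 - s := sub_nonneg.mpr hs.2
  have hpow : (x - c) ^ (p + q - 1) = (x - c) * ((x - c) ^ (q - 1) * (x - c) ^ (p - 1)) := by
    rw [show p + q - 1 = 1 + (q - 1 + (p - 1)) by ring, Real.rpow_add hxc, Real.rpow_add hxc,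
      Real.rpow_one]
  rw [show x - ((x - c) * s + c) = (x - c) * (1 - s) by ring,
    show (x - c) * s + c - c = (x - c) * s by ring, Real.mul_rpow hxc.le hs1,
    Real.mul_rpow hxc.le hs0, hpow]
  ring

/-- Case `α < 0` of the Riemann–Liouville fractional derivative of the power
function `t ↦ (t - c)^μ` with base point `a`:
`D_a^α (x - c)^μ = Γ(μ+1)/Γ(μ-α+1) · (x - c)^{μ-α} · G_{-α}((a-c)/(x-c), μ+1)`. -/
theorem riemannLiouville_deriv_power_neg_order
    (a c x μ α : ℝ) (hca : c ≤ a) (hax : a < x) (hμ : -1 < μ) (hα : α < 0) :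
    (1 / Real.Gamma (-α)) * ∫ t in a..x, (x - t) ^ (-α - 1) * (t - c) ^ μ
      = (Real.Gamma (μ + 1) / Real.Gamma (μ - α + 1)) * (x - c) ^ (μ - α) *
        Gfun (-α) ((a - c) / (x - c)) (μ + 1) := by
  have hp : 0 < μ + 1 := by linarith
  have hq : 0 < -α := by linarith
  have hxc : 0 < x - c := by linarith
  have hr1 : (a - c) / (x - c) ≤ 1 := (div_le_one hxc).mpr (by linarith)
  have hsubst := integral_sub_rpow_mul_rpow_sub (μ + 1) (-α) hca hax.le (by linarith)
  rw [integral_rpow_mul_one_sub_rpow_eq_betaFun_sub_incBetaFun hp hq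
      (div_nonneg (by linarith) hxc.le) hr1, add_sub_cancel_right,
    show μ + 1 + -α - 1 = μ - α by ring] at hsubst
  have hB : betaFun (μ + 1) (-α)
      = Real.Gamma (μ + 1) * Real.Gamma (-α) / Real.Gamma (μ - α + 1) := by
    rw [betaFun_eq_beta hp hq, ProbabilityTheory.beta, show μ + 1 + -α = μ - α + 1 by ring]
  have hΓ : 0 < Real.Gamma (-α) := Real.Gamma_pos_of_pos hq
  rw [hsubst, ← betaFun_mul_Gfun _ (betaFun_pos hp hq).ne', hB]
  field_simp
end

section
/- Let a < x be real numbers, let μ > −1, let α > 0 be a non-integer real number and set n = ⌈α⌉. Then the n-th derivative with respect to x of the function y ↦ (1/Γ(n−α)) ∫_a^y (y − t)^{n−α−1} (t − a)^μ dt, evaluated at x, equals (Γ(μ+1)/Γ(μ−α+1)) (x − a)^{μ−α}; that is, the Riemann–Liouville fractional derivative of order α with base point a of t ↦ (t − a)^μ is Γ(μ+1)/Γ(μ−α+1) · (x − a)^{μ−α}. -/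
/-!
Substituting `t = a + (y - a) s` turns the Riemann–Liouville integral of order `c = n - α` of
`(t - a)^μ` into `(y - a)^(μ + c)` times a Beta integral, so for `y > a` it equals
`Γ(μ + 1) / Γ(μ + c + 1) * (y - a)^(μ + c)`. Differentiating `n` times brings down the falling
factorial `(μ + c)(μ + c - 1)⋯(μ + c - n + 1)`, and the functional equation of `Γ` turns
`Γ(μ + c + 1)⁻¹` times it into `Γ(μ - α + 1)⁻¹`.
-/

open Topology Real

-- Also true at the poles, where Mathlib's `Γ` is `0`: this is the recursion for `1 / Γ`.
theorem Real.Gamma_add_one_inv_mul (w : ℝ) : (Gamma (w + 1))⁻¹ * w = (Gamma w)⁻¹ := by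
  rcases eq_or_ne w 0 with rfl | hw
  · simp
  · rw [Gamma_add_one hw, mul_inv, mul_right_comm, inv_mul_cancel₀ hw, one_mul]

theorem Real.Gamma_add_one_inv_mul_descPochhammer_eval (w : ℝ) (n : ℕ) :
    (Gamma (w + 1))⁻¹ * (descPochhammer ℝ n).eval w = (Gamma (w + 1 - n))⁻¹ := by
  induction n with
  | zero => simp
  | succ n ih =>
    rw [descPochhammer_succ_eval, ← mul_assoc, ih, Nat.cast_succ,
      show w + 1 - n = w - n + 1 by ring, Gamma_add_one_inv_mul]
    ring_nf

theorem iteratedDeriv_sub_const_rpow (a p x : ℝ) (n : ℕ) :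
    iteratedDeriv n (fun y => (y - a) ^ p) x
      = (descPochhammer ℝ n).eval p * (x - a) ^ (p - n) := by
  rw [iteratedDeriv_comp_sub_const n (fun y : ℝ => y ^ p) a, iteratedDeriv_eq_iterate]
  exact iter_deriv_rpow_const p (x - a) n

theorem integral_rpow_mul_one_sub_rpow {p q : ℝ} (hp : 0 < p) (hq : 0 < q) :
    ∫ s in (0 : ℝ)..1, s ^ (p - 1) * (1 - s) ^ (q - 1) = Gamma p * Gamma q / Gamma (p + q) := by
  have hB := Complex.betaIntegral_eq_Gamma_mul_div p q (by simpa) (by simpa)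
  have hreal : Complex.betaIntegral p q
      = ((∫ s in (0 : ℝ)..1, s ^ (p - 1) * (1 - s) ^ (q - 1) : ℝ) : ℂ) := by
    rw [Complex.betaIntegral, ← intervalIntegral.integral_ofReal]
    refine intervalIntegral.integral_congr fun s hs => ?_
    rw [Set.uIcc_of_le zero_le_one] at hs
    rw [Complex.ofReal_mul, Complex.ofReal_cpow hs.1, Complex.ofReal_cpow (sub_nonneg.2 hs.2)]
    push_cast
    rfl
  rw [hreal, ← Complex.ofReal_add, Complex.Gamma_ofReal, Complex.Gamma_ofReal,
    Complex.Gamma_ofReal] at hB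
  exact_mod_cast hB

theorem integral_sub_rpow_mul_sub_rpow {a y : ℝ} (hay : a < y) (μ c : ℝ) :
    ∫ t in a..y, (y - t) ^ (c - 1) * (t - a) ^ μ
      = (y - a) ^ (μ + c) * ∫ s in (0 : ℝ)..1, s ^ μ * (1 - s) ^ (c - 1) := by
  have hL : 0 < y - a := sub_pos.2 hay
  have hsubst := intervalIntegral.smul_integral_comp_mul_add
    (fun t => (y - t) ^ (c - 1) * (t - a) ^ μ) (y - a) (a := 0) (b := 1) a
  simp only [mul_zero, zero_add, mul_one, sub_add_cancel, smul_eq_mul] at hsubst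
  rw [← hsubst, ← intervalIntegral.integral_const_mul, ← intervalIntegral.integral_const_mul]
  refine intervalIntegral.integral_congr fun s hs => ?_
  rw [Set.uIcc_of_le zero_le_one] at hs
  have hpow : (y - a) * ((y - a) ^ (c - 1) * (y - a) ^ μ) = (y - a) ^ (μ + c) := by
    rw [show μ + c = 1 + (c - 1) + μ by ring, rpow_add hL, rpow_add hL, rpow_one, mul_assoc]
  rw [show y - ((y - a) * s + a) = (y - a) * (1 - s) by ring,
    show (y - a) * s + a - a = (y - a) * s by ring,
    mul_rpow hL.le (sub_nonneg.2 hs.2), mul_rpow hL.le hs.1, ← hpow]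
  ring

noncomputable def riemannLiouvilleIntegral (a c : ℝ) (f : ℝ → ℝ) (y : ℝ) : ℝ :=
  1 / Gamma c * ∫ t in a..y, (y - t) ^ (c - 1) * f t

theorem riemannLiouvilleIntegral_sub_rpow {a y μ c : ℝ} (hay : a < y) (hμ : -1 < μ)
    (hc : 0 < c) :
    riemannLiouvilleIntegral a c (fun t => (t - a) ^ μ) y
      = Gamma (μ + 1) / Gamma (μ + c + 1) * (y - a) ^ (μ + c) := by
  have hB := integral_rpow_mul_one_sub_rpow (neg_lt_iff_pos_add.1 hμ) hc
  rw [add_sub_cancel_right, add_right_comm] at hB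
  rw [riemannLiouvilleIntegral, integral_sub_rpow_mul_sub_rpow hay, hB]
  field_simp [(Gamma_pos_of_pos hc).ne']

theorem riemannLiouville_deriv_power_base_pos_order_general
    (a x μ α : ℝ) (n : ℕ) (hax : a < x) (hμ : -1 < μ)
    (hαint : ∀ m : ℤ, α ≠ (m : ℝ)) (hn : n = ⌈α⌉₊) :
    iteratedDeriv n
        (fun y => (1 / Real.Gamma ((n : ℝ) - α)) *
          ∫ t in a..y, (y - t) ^ ((n : ℝ) - α - 1) * (t - a) ^ μ) x
      = (Real.Gamma (μ + 1) / Real.Gamma (μ - α + 1)) * (x - a) ^ (μ - α) := by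
  have hαn : α < n := by
    subst hn
    exact (Nat.le_ceil α).lt_of_ne (by exact_mod_cast hαint ⌈α⌉₊)
  have hev : riemannLiouvilleIntegral a (n - α) (fun t => (t - a) ^ μ)
      =ᶠ[𝓝 x]
        fun y => Gamma (μ + 1) / Gamma (μ + (n - α) + 1) * (y - a) ^ (μ + (n - α)) := by
    filter_upwards [eventually_gt_nhds hax] with y hy
    exact riemannLiouvilleIntegral_sub_rpow hy hμ (sub_pos.2 hαn)
  change iteratedDeriv n (riemannLiouvilleIntegral a (n - α) (fun t => (t - a) ^ μ)) x = _
  rw [hev.iteratedDeriv_eq, iteratedDeriv_const_mul_field, iteratedDeriv_sub_const_rpow,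
    div_eq_mul_inv, mul_assoc, ← mul_assoc (Gamma _)⁻¹,
    Gamma_add_one_inv_mul_descPochhammer_eval, ← mul_assoc, ← div_eq_mul_inv]
  ring_nf

/-- Case `α > 0` non-integer, `n = ⌈α⌉`, of the closed formula for the
Riemann–Liouville fractional derivative of `t ↦ (t - a)^μ` with base point `a`:
`(dⁿ/dxⁿ)[ (1/Γ(n-α)) ∫_a^x (x - t)^{n-α-1} (t - a)^μ dt ]
  = Γ(μ+1)/Γ(μ-α+1) · (x - a)^{μ-α}`. -/
theorem riemannLiouville_deriv_power_base_pos_order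
    (a x μ α : ℝ) (n : ℕ) (hax : a < x) (hμ : -1 < μ) (hα : 0 < α)
    (hαint : ∀ m : ℤ, α ≠ (m : ℝ)) (hn : n = ⌈α⌉₊) :
    iteratedDeriv n
        (fun y => (1 / Real.Gamma ((n : ℝ) - α)) *
          ∫ t in a..y, (y - t) ^ ((n : ℝ) - α - 1) * (t - a) ^ μ) x
      = (Real.Gamma (μ + 1) / Real.Gamma (μ - α + 1)) * (x - a) ^ (μ - α) :=
  riemannLiouville_deriv_power_base_pos_order_general a x μ α n hax hμ hαint hn
end
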